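/- Among all Borel probability measures π on [0,1] satisfying ∫ θ dπ(θ) = 1/2 and ∫ θ² dπ(θ) = 2/5, the integral ∫ S(θ) dπ(θ) attains its minimum value (2/5)·log 2 uniquely at the discrete measure π_LI = (3/10)·δ_{0} + (3/10)·δ_{1} + (2/5)·δ_{1/2}, where δ_t denotes the Dirac measure at t. That is, for every such π, ∫ S(θ) dπ(θ) ≥ (2/5)·log 2, with equality if and only if π = π_LI. -/

import Mathlib

/-!
On `[0,1]` the entropy dominates the quadratic `4 log 2 · θ(1-θ)`, with equality exactly at
`θ ∈ {0, 1/2, 1}`. Integrating the quadratic against `π` only involves the two prescribed moments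
and gives `4 log 2 · (1/2 - 2/5) = (2/5) log 2`. Equality forces `π` to live on `{0, 1/2, 1}`,
and there the total mass and the two moments determine the three weights.

The pointwise bound uses `log θ ≤ -log 6` and `log (1-θ) ≤ -θ` (plus `e > 8/3`) near the endpoints,
and the cubic Taylor bound `log (1+x) < x - x²/2 + x³/3` on `[1/6, 5/6]`.
-/

open MeasureTheory
open scoped ENNReal

/-- The binary entropy function `S(θ) = −θ log θ − (1−θ) log(1−θ)`
(with the convention `0 · log 0 = 0`, which holds automatically since `Real.log 0 = 0`). -/
noncomputable def binEnt (θ : ℝ) : ℝ := -θ * Real.log θ - (1 - θ) * Real.log (1 - θ)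

section Pointwise

open Real Set

lemma binEnt_eq_binEntropy : binEnt = binEntropy := by
  ext θ
  simp only [binEnt, binEntropy, log_inv]
  ring

lemma log_one_add_lt_cubic {x : ℝ} (hx : -1 < x) (hx0 : x ≠ 0) :
    log (1 + x) < x - x ^ 2 / 2 + x ^ 3 / 3 := by
  let f : ℝ → ℝ := fun y ↦ y - y ^ 2 / 2 + y ^ 3 / 3 - log (1 + y)
  have hf : ∀ y ∈ Ioi (-1 : ℝ), HasDerivAt f (y ^ 3 / (1 + y)) y := by
    intro y hy
    have hy : 1 + y ≠ 0 := by simp only [mem_Ioi] at hy; linarith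
    refine ((((hasDerivAt_id' y).sub ((hasDerivAt_pow 2 y).div_const 2)).add
      ((hasDerivAt_pow 3 y).div_const 3)).sub
        (((hasDerivAt_id' y).const_add 1).log hy)).congr_deriv ?_
    field_simp
    ring
  have hcont : ContinuousOn f (Ioi (-1)) := fun y hy ↦ (hf y hy).continuousAt.continuousWithinAt
  have hf0 : f 0 = 0 := by simp [f]
  suffices 0 < f x by simp only [f] at this; linarith
  rcases hx0.lt_or_gt with hneg | hpos
  · have hanti : StrictAntiOn f (Ioc (-1) 0) := by
      refine strictAntiOn_of_deriv_neg (convex_Ioc _ _) (hcont.mono Ioc_subset_Ioi_self) ?_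
      intro y hy
      rw [interior_Ioc] at hy
      rw [(hf y hy.1).deriv]
      exact div_neg_of_neg_of_pos (Odd.pow_neg (by decide) hy.2) (by linarith [hy.1])
    simpa [hf0] using hanti ⟨hx, hneg.le⟩ ⟨by norm_num, le_rfl⟩ hneg
  · have hmono : StrictMonoOn f (Ici 0) := by
      refine strictMonoOn_of_deriv_pos (convex_Ici _) (hcont.mono fun y hy ↦ ?_) ?_
      · simp only [mem_Ici, mem_Ioi] at hy ⊢; linarith
      intro y hy
      rw [interior_Ici] at hy
      rw [(hf y (by simp only [mem_Ioi] at hy ⊢; linarith)).deriv]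
      exact div_pos (pow_pos hy 3) (by linarith [mem_Ioi.1 hy])
    simpa [hf0] using hmono (mem_Ici.2 le_rfl) hpos.le hpos

lemma four_mul_log_two_lt_log_six_add_one : 4 * log 2 < log 6 + 1 := by
  have h : 4 * log 2 = log 6 + log (8 / 3) := by
    rw [← log_mul (by norm_num) (by norm_num), show (6 : ℝ) * (8 / 3) = 2 ^ 4 by norm_num, log_pow]
    norm_num
  have h83 : log (8 / 3) < 1 := by
    rw [log_lt_iff_lt_exp (by norm_num)]
    linarith [exp_one_gt_d9]
  linarith

lemma four_mul_log_two_mul_lt_binEnt_of_le {θ : ℝ} (h0 : 0 < θ) (h : θ ≤ 1 / 6) :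
    4 * log 2 * (θ * (1 - θ)) < binEnt θ := by
  have h1 : 0 < 1 - θ := by linarith
  have hlog : log θ ≤ -log 6 := by
    rw [← log_inv]
    exact log_le_log h0 (by linarith)
  have hlog' : log (1 - θ) ≤ -θ := by linarith [log_le_sub_one_of_pos h1]
  have hS : θ * log 6 + (1 - θ) * θ ≤ binEnt θ := by
    rw [binEnt]
    nlinarith [mul_le_mul_of_nonneg_left hlog h0.le, mul_le_mul_of_nonneg_left hlog' h1.le]
  have hlog2 : 1 < 4 * log 2 := by linarith [log_two_gt_d9]
  have := four_mul_log_two_lt_log_six_add_one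
  nlinarith [mul_pos h0 (show 0 < log 6 - (4 * log 2 - 1) * (1 - θ) by nlinarith)]

lemma four_mul_log_two_mul_lt_binEnt_of_mem_Icc {θ : ℝ} (h : θ ∈ Icc (1 / 6 : ℝ) (5 / 6))
    (hne : θ ≠ 1 / 2) : 4 * log 2 * (θ * (1 - θ)) < binEnt θ := by
  obtain ⟨u, rfl⟩ : ∃ u, θ = (1 + u) / 2 := ⟨2 * θ - 1, by ring⟩
  obtain ⟨h1, h2⟩ := h
  have hu : u ≠ 0 := by rintro rfl; norm_num at hne
  have hp : 0 < 1 + u := by linarith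
  have hm : 0 < 1 - u := by linarith
  have hlog_add := log_one_add_lt_cubic (by linarith) hu
  have hlog_sub : log (1 - u) < -u - u ^ 2 / 2 - u ^ 3 / 3 := by
    have := log_one_add_lt_cubic (x := -u) (by linarith) (neg_ne_zero.2 hu)
    rw [← sub_eq_add_neg] at this
    linarith
  have hS : binEnt ((1 + u) / 2) =
      log 2 - ((1 + u) * log (1 + u) + (1 - u) * log (1 - u)) / 2 := by
    rw [binEnt, show 1 - (1 + u) / 2 = (1 - u) / 2 by ring, log_div hp.ne' two_ne_zero,
      log_div hm.ne' two_ne_zero]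
    ring
  have hsum : (1 + u) * log (1 + u) + (1 - u) * log (1 - u) < u ^ 2 + 2 * u ^ 4 / 3 := by
    nlinarith [mul_lt_mul_of_pos_left hlog_add hp, mul_lt_mul_of_pos_left hlog_sub hm]
  have hu2 : u ^ 2 ≤ 4 / 9 := by nlinarith
  have hlog2 := log_two_gt_d9
  rw [hS]
  nlinarith [mul_nonneg (sq_nonneg u) (show 0 ≤ log 2 - 1 / 2 - u ^ 2 / 3 by linarith)]

lemma four_mul_log_two_mul_lt_binEnt {θ : ℝ} (h0 : 0 < θ) (h1 : θ < 1) (hne : θ ≠ 1 / 2) :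
    4 * log 2 * (θ * (1 - θ)) < binEnt θ := by
  rcases le_or_gt θ (1 / 6) with hθ | hθ
  · exact four_mul_log_two_mul_lt_binEnt_of_le h0 hθ
  rcases le_or_gt θ (5 / 6) with hθ' | hθ'
  · exact four_mul_log_two_mul_lt_binEnt_of_mem_Icc ⟨hθ.le, hθ'⟩ hne
  have := four_mul_log_two_mul_lt_binEnt_of_le (θ := 1 - θ) (by linarith) (by linarith)
  rw [binEnt_eq_binEntropy] at this ⊢
  rwa [binEntropy_one_sub, sub_sub_cancel, mul_comm (1 - θ)] at this

lemma four_mul_log_two_mul_le_binEnt {θ : ℝ} (h : θ ∈ Icc (0 : ℝ) 1) :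
    4 * log 2 * (θ * (1 - θ)) ≤ binEnt θ := by
  obtain ⟨h0, h1⟩ := h
  rcases h0.eq_or_lt with rfl | h0
  · simp [binEnt]
  rcases h1.eq_or_lt with rfl | h1
  · simp [binEnt]
  rcases eq_or_ne θ (1 / 2) with rfl | hne
  · rw [binEnt_eq_binEntropy, one_div, binEntropy_two_inv]
    linarith
  exact (four_mul_log_two_mul_lt_binEnt h0 h1 hne).le

end Pointwise

/-- The latent information prior: `π_LI = (3/10)·δ₀ + (3/10)·δ₁ + (2/5)·δ_{1/2}`. -/
noncomputable def piLI : Measure ℝ :=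
  (3 / 10 : ℝ≥0∞) • Measure.dirac (0 : ℝ) + (3 / 10 : ℝ≥0∞) • Measure.dirac (1 : ℝ) +
    (2 / 5 : ℝ≥0∞) • Measure.dirac ((1 : ℝ) / 2)

lemma ContinuousOn.integrable_of_ae_mem {X E : Type*} [MeasurableSpace X] [TopologicalSpace X]
    [OpensMeasurableSpace X] [T2Space X] [NormedAddCommGroup E] {μ : Measure X}
    [IsFiniteMeasureOnCompacts μ] {f : X → E} {K : Set X} (hK : IsCompact K)
    (hf : ContinuousOn f K) (h : ∀ᵐ x ∂μ, x ∈ K) : Integrable f μ := by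
  rw [← Measure.restrict_eq_self_of_ae_mem h]
  exact hf.integrableOn_compact hK

lemma integral_mul_one_sub {μ : Measure ℝ} (h1 : Integrable (fun θ ↦ θ) μ)
    (h2 : Integrable (fun θ ↦ θ ^ 2) μ) :
    ∫ θ, θ * (1 - θ) ∂μ = ∫ θ, θ ∂μ - ∫ θ, θ ^ 2 ∂μ := by
  rw [← integral_sub h1 h2]
  congr with θ
  ring

section ThreePoints

variable {α : Type*} [MeasurableSpace α] [MeasurableSingletonClass α]

lemma MeasureTheory.Measure.eq_smul_dirac_add_of_ae_mem {μ : Measure α} {x y z : α}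
    (hxy : x ≠ y) (hxz : x ≠ z) (hyz : y ≠ z) (h : ∀ᵐ t ∂μ, t ∈ ({x, y, z} : Set α)) :
    μ = μ {x} • Measure.dirac x + μ {y} • Measure.dirac y + μ {z} • Measure.dirac z := by
  conv_lhs => rw [← Measure.restrict_eq_self_of_ae_mem h]
  rw [Set.insert_eq, Set.insert_eq, Measure.restrict_union (by simp [hxy, hxz])
      ((measurableSet_singleton y).union (measurableSet_singleton z)),
    Measure.restrict_union (by simp [hyz]) (measurableSet_singleton z),
    Measure.restrict_singleton, Measure.restrict_singleton, Measure.restrict_singleton, add_assoc]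

lemma integral_smul_dirac_add_three {a b c : ℝ≥0∞} (ha : a ≠ ∞) (hb : b ≠ ∞) (hc : c ≠ ∞)
    (x y z : α) (f : α → ℝ) :
    ∫ t, f t ∂(a • Measure.dirac x + b • Measure.dirac y + c • Measure.dirac z) =
      a.toReal * f x + b.toReal * f y + c.toReal * f z := by
  have hi : ∀ {d : ℝ≥0∞} (w : α), d ≠ ∞ → Integrable f (d • Measure.dirac w) :=
    fun w hd ↦ (integrable_dirac enorm_lt_top).smul_measure hd
  rw [integral_add_measure ((hi x ha).add_measure (hi y hb)) (hi z hc),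
    integral_add_measure (hi x ha) (hi y hb)]
  simp [integral_smul_measure, integral_dirac]

end ThreePoints

lemma eq_piLI_of_ae_mem_of_moments (μ : Measure ℝ) [IsProbabilityMeasure μ]
    (h : ∀ᵐ θ ∂μ, θ ∈ ({0, 1, 1 / 2} : Set ℝ)) (hm1 : ∫ θ, θ ∂μ = 1 / 2)
    (hm2 : ∫ θ, θ ^ 2 ∂μ = 2 / 5) : μ = piLI := by
  have hμ := Measure.eq_smul_dirac_add_of_ae_mem (by norm_num) (by norm_num) (by norm_num) h
  have hint (f : ℝ → ℝ) : ∫ θ, f θ ∂μ =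
      μ.real {0} * f 0 + μ.real {1} * f 1 + μ.real {1 / 2} * f (1 / 2) := by
    conv_lhs => rw [hμ]
    exact integral_smul_dirac_add_three (measure_ne_top _ _) (measure_ne_top _ _)
      (measure_ne_top _ _) _ _ _ f
  have hmass := hint fun _ ↦ 1
  have hmean := hm1 ▸ hint id
  have hsecond := hm2 ▸ hint (· ^ 2)
  simp only [integral_const, probReal_univ, smul_eq_mul, id] at hmass hmean hsecond
  norm_num at hmass hmean hsecond
  have hweight {t r : ℝ} (ht : μ.real {t} = r) : μ {t} = ENNReal.ofReal r := by
    rw [← ht, ofReal_measureReal]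
  rw [hμ, piLI, hweight (t := 0) (r := 3 / 10) (by linarith),
    hweight (t := 1) (r := 3 / 10) (by linarith), hweight (t := 1 / 2) (r := 2 / 5) (by linarith)]
  norm_num [ENNReal.ofReal_div_of_pos]

lemma integral_binEnt_piLI : ∫ θ, binEnt θ ∂piLI = 2 / 5 * Real.log 2 := by
  rw [piLI, integral_smul_dirac_add_three (ENNReal.div_ne_top (by simp) (by simp))
    (ENNReal.div_ne_top (by simp) (by simp)) (ENNReal.div_ne_top (by simp) (by simp)),
    binEnt_eq_binEntropy, one_div, Real.binEntropy_two_inv]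
  norm_num

lemma mem_of_four_mul_log_two_mul_eq_binEnt {θ : ℝ} (h : θ ∈ Set.Icc (0 : ℝ) 1)
    (heq : 4 * Real.log 2 * (θ * (1 - θ)) = binEnt θ) : θ ∈ ({0, 1, 1 / 2} : Set ℝ) := by
  by_contra hne
  simp only [Set.mem_insert_iff, Set.mem_singleton_iff, not_or] at hne
  obtain ⟨h0, h1, h2⟩ := hne
  exact (four_mul_log_two_mul_lt_binEnt (h.1.lt_of_ne' h0) (h.2.lt_of_ne h1) h2).ne heq

/-- Among Borel probability measures `π` on `[0,1]` with `∫θdπ = 1/2` and `∫θ²dπ = 2/5`,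
the integral `∫ S dπ` attains its minimum `(2/5)·log 2` uniquely at `π_LI`. -/
theorem latent_information_prior_unique_minimizer (π : Measure ℝ) [IsProbabilityMeasure π]
    (hsupp : π (Set.Icc (0 : ℝ) 1)ᶜ = 0)
    (hm1 : (∫ θ, θ ∂π) = 1 / 2) (hm2 : (∫ θ, θ ^ 2 ∂π) = 2 / 5) :
    (2 / 5) * Real.log 2 ≤ ∫ θ, binEnt θ ∂π ∧
    ((∫ θ, binEnt θ ∂π) = (2 / 5) * Real.log 2 ↔ π = piLI) := by
  have hae : ∀ᵐ θ ∂π, θ ∈ Set.Icc (0 : ℝ) 1 := mem_ae_iff.2 hsupp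
  have hint {f : ℝ → ℝ} (hf : Continuous f) : Integrable f π :=
    hf.continuousOn.integrable_of_ae_mem isCompact_Icc hae
  set q : ℝ → ℝ := fun θ ↦ 4 * Real.log 2 * (θ * (1 - θ))
  have hS : Integrable binEnt π := hint (binEnt_eq_binEntropy ▸ Real.binEntropy_continuous)
  have hq : Integrable q π := hint (by fun_prop)
  have hq_int : ∫ θ, q θ ∂π = 2 / 5 * Real.log 2 := by
    rw [integral_const_mul, integral_mul_one_sub (hint continuous_id) (hint (continuous_pow 2)),
      hm1, hm2]
    ring
  have hle : q ≤ᵐ[π] binEnt := hae.mono fun θ ↦ four_mul_log_two_mul_le_binEnt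
  refine ⟨hq_int ▸ integral_mono_ae hq hS hle, fun heq ↦ ?_, fun hπ ↦ hπ ▸ integral_binEnt_piLI⟩
  have hq_ae : q =ᵐ[π] binEnt := (integral_eq_iff_of_ae_le hq hS hle).1 (hq_int.trans heq.symm)
  refine eq_piLI_of_ae_mem_of_moments π ?_ hm1 hm2
  filter_upwards [hae, hq_ae] with θ hθ hθq using mem_of_four_mul_log_two_mul_eq_binEnt hθ hθq
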